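/- For every deterministic program M (possibly with low-security inputs), the maximum of the min-entropy-based quantitative information flow over all distributions equals the channel capacity: max_μ ME[μ](M) = CC(M). -/

import Mathlib

/-!
Statement 6: For every deterministic program `M : ℍ × 𝕃 → 𝕆`,
`max_μ ME[μ](M) = CC(M)`, where the maximum is over all probability
distributions `μ` on `ℍ × 𝕃` and `CC(M) = max_μ SE[μ](M)`.
-/

/-- `p · log₂(1/p)`, one summand of the Shannon entropy. -/
noncomputable def entTerm (p : ℝ) : ℝ := p * Real.logb 2 (1 / p)

variable {Hi Li Oi : Type*}

/-- Marginal probability `μ(L = ℓ)`. -/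
noncomputable def pL [Fintype Hi] (μ : Hi × Li → ℝ) (ℓ : Li) : ℝ := ∑ h, μ (h, ℓ)

/-- Joint probability `μ(O = o, L = ℓ)` where `O = M(H,L)`. -/
noncomputable def pOL [Fintype Hi] [DecidableEq Oi] (M : Hi × Li → Oi) (μ : Hi × Li → ℝ)
    (o : Oi) (ℓ : Li) : ℝ := ∑ h, if M (h, ℓ) = o then μ (h, ℓ) else 0

/-- Conditional Shannon entropy `𝓗[μ](H|L)`. -/
noncomputable def condEntHL [Fintype Hi] [Fintype Li] (μ : Hi × Li → ℝ) : ℝ :=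
  ∑ ℓ : Li, pL μ ℓ * ∑ h : Hi, entTerm (μ (h, ℓ) / pL μ ℓ)

/-- Conditional Shannon entropy `𝓗[μ](H|O,L)` where `O = M(H,L)`. -/
noncomputable def condEntHOL [Fintype Hi] [Fintype Li] [Fintype Oi] [DecidableEq Oi]
    (M : Hi × Li → Oi) (μ : Hi × Li → ℝ) : ℝ :=
  ∑ ℓ : Li, ∑ o : Oi,
    pOL M μ o ℓ * ∑ h : Hi, entTerm ((if M (h, ℓ) = o then μ (h, ℓ) else 0) / pOL M μ o ℓ)

/-- Shannon-entropy-based QIF `SE[μ](M) = 𝓗[μ](H|L) − 𝓗[μ](H|O,L)`. -/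
noncomputable def SE [Fintype Hi] [Fintype Li] [Fintype Oi] [DecidableEq Oi]
    (M : Hi × Li → Oi) (μ : Hi × Li → ℝ) : ℝ :=
  condEntHL μ - condEntHOL M μ

/-- Channel-capacity-based QIF `CC(M) = max_μ SE[μ](M)`. -/
noncomputable def CC [Fintype Hi] [Fintype Li] [Fintype Oi] [DecidableEq Oi]
    (M : Hi × Li → Oi) : ℝ :=
  sSup {x : ℝ | ∃ μ : Hi × Li → ℝ, (∀ a, 0 ≤ μ a) ∧ (∑ a, μ a = 1) ∧ x = SE M μ}

/-- Conditional vulnerability `𝓥[μ](H|L) = Σ_ℓ μ(L=ℓ) · max_h μ(H=h|L=ℓ)`. -/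
noncomputable def VHL [Fintype Hi] [Fintype Li] [Nonempty Hi] (μ : Hi × Li → ℝ) : ℝ :=
  ∑ ℓ : Li, pL μ ℓ *
    Finset.univ.sup' Finset.univ_nonempty (fun h : Hi => μ (h, ℓ) / pL μ ℓ)

/-- Conditional vulnerability `𝓥[μ](H|O,L)` where `O = M(H,L)`. -/
noncomputable def VHOL [Fintype Hi] [Fintype Li] [Fintype Oi] [DecidableEq Oi] [Nonempty Hi]
    (M : Hi × Li → Oi) (μ : Hi × Li → ℝ) : ℝ :=
  ∑ ℓ : Li, ∑ o : Oi, pOL M μ o ℓ *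
    Finset.univ.sup' Finset.univ_nonempty
      (fun h : Hi => (if M (h, ℓ) = o then μ (h, ℓ) else 0) / pOL M μ o ℓ)

/-- Min-entropy-based QIF `ME[μ](M) = 𝓗∞[μ](H|L) − 𝓗∞[μ](H|O,L)`. -/
noncomputable def ME [Fintype Hi] [Fintype Li] [Fintype Oi] [DecidableEq Oi] [Nonempty Hi]
    (M : Hi × Li → Oi) (μ : Hi × Li → ℝ) : ℝ :=
  Real.logb 2 (1 / VHL μ) - Real.logb 2 (1 / VHOL M μ)

/-
Both sides equal `log₂ K`, where `K` is the largest number of distinct outputs of `M(·, ℓ)`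
over the low inputs `ℓ`. Since `O` is a function of `(H, L)`, the Shannon leakage is `𝓗(O | L)`,
which is at most `log₂` of the number of values `O` takes when `L = ℓ`. For vulnerability, each
output `o` contributes at most `max_h μ(h, ℓ)` to `𝓥(H | O, L)`, so `𝓥(H | O, L) ≤ K · 𝓥(H | L)`.
Both bounds are attained by the uniform distribution on `K` secrets that `M(·, ℓ)` separates, at a
maximizing `ℓ`: there the output reveals the secret.
-/

open Finset Real

lemma entTerm_zero : entTerm 0 = 0 := by simp [entTerm]

lemma entTerm_eq_negMulLog_div_log (p : ℝ) : entTerm p = negMulLog p / log 2 := by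
  rw [entTerm, negMulLog, logb, one_div, log_inv]
  ring

section Entropy

variable {ι : Type*} {s : Finset ι} {q : ι → ℝ}

lemma sum_negMulLog_sub_negMulLog_sum (hq : ∀ i ∈ s, 0 ≤ q i) :
    ∑ i ∈ s, negMulLog (q i) - negMulLog (∑ i ∈ s, q i) =
      (∑ i ∈ s, q i) * ∑ i ∈ s, negMulLog (q i / ∑ i ∈ s, q i) := by
  obtain ⟨c, hc_eq⟩ : ∃ c, ∑ i ∈ s, q i = c := ⟨_, rfl⟩
  rw [hc_eq]
  rcases (hc_eq ▸ sum_nonneg hq : 0 ≤ c).eq_or_lt with hc | hc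
  · have hzero : ∀ i ∈ s, q i = 0 := (sum_eq_zero_iff_of_nonneg hq).mp (hc_eq.trans hc.symm)
    rw [← hc, sum_eq_zero fun i hi => by rw [hzero i hi, negMulLog_zero]]
    simp
  · have hsplit : ∀ i ∈ s, negMulLog (q i) = q i / c * negMulLog c + c * negMulLog (q i / c) :=
      fun i _ => by rw [← negMulLog_mul, mul_div_cancel₀ _ hc.ne']
    rw [sum_congr rfl hsplit, sum_add_distrib, ← sum_mul, ← mul_sum, ← sum_div, hc_eq,
      div_self hc.ne']
    ring

lemma sum_negMulLog_le_log_card (hq : ∀ i ∈ s, 0 ≤ q i) (h1 : ∑ i ∈ s, q i = 1) :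
    ∑ i ∈ s, negMulLog (q i) ≤ log #s := by
  have hs : (0 : ℝ) < #s := by
    have : s.Nonempty := nonempty_of_sum_ne_zero (by rw [h1]; exact one_ne_zero)
    exact_mod_cast this.card_pos
  have hjensen := concaveOn_negMulLog.le_map_sum (t := s) (w := fun _ => (#s : ℝ)⁻¹) (p := q)
    (fun _ _ => by positivity) (by simp [hs.ne']) (fun i hi => hq i hi)
  have hnml : negMulLog (#s : ℝ)⁻¹ = (#s : ℝ)⁻¹ * log #s := by simp [negMulLog, log_inv]
  simp only [smul_eq_mul, ← mul_sum, h1, mul_one, hnml] at hjensen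
  exact le_of_mul_le_mul_left hjensen (inv_pos.mpr hs)

lemma sum_negMulLog_sub_negMulLog_sum_le (hq : ∀ i ∈ s, 0 ≤ q i) :
    ∑ i ∈ s, negMulLog (q i) - negMulLog (∑ i ∈ s, q i) ≤ (∑ i ∈ s, q i) * log #s := by
  rw [sum_negMulLog_sub_negMulLog_sum hq]
  rcases (sum_nonneg hq).eq_or_lt with hc | hc
  · simp [← hc]
  · refine mul_le_mul_of_nonneg_left (sum_negMulLog_le_log_card (fun i hi => ?_) ?_) hc.le
    · exact div_nonneg (hq i hi) hc.le
    · rw [← sum_div, div_self hc.ne']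

lemma sum_mul_sum_entTerm_div (hq : ∀ i ∈ s, 0 ≤ q i) :
    (∑ i ∈ s, q i) * ∑ i ∈ s, entTerm (q i / ∑ i ∈ s, q i) =
      (∑ i ∈ s, negMulLog (q i) - negMulLog (∑ i ∈ s, q i)) / log 2 := by
  simp only [entTerm_eq_negMulLog_div_log, ← sum_div, ← mul_div_assoc]
  rw [sum_negMulLog_sub_negMulLog_sum hq]

end Entropy

lemma sum_mul_sup'_div_sum {α : Type*} [Fintype α] [Nonempty α] {f : α → ℝ}
    (hf : ∀ a, 0 ≤ f a) :
    (∑ a, f a) * univ.sup' univ_nonempty (fun a => f a / ∑ a, f a) =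
      univ.sup' univ_nonempty f := by
  rcases (sum_nonneg fun a _ => hf a).eq_or_lt with hc | hc
  · have hzero : f = 0 := funext fun a =>
      (sum_eq_zero_iff_of_nonneg fun a _ => hf a).mp hc.symm a (mem_univ a)
    simp [hzero]
  · simp only [div_eq_mul_inv]
    rw [← sup'_mul₀ (inv_nonneg.mpr hc.le)]
    field_simp

lemma exists_fiber_eq_zero_of_ne {α β : Type*} [Nonempty α] [DecidableEq β] (g : α → β)
    (f : α → ℝ) (hinj : Set.InjOn g (Function.support f)) (b : β) :
    ∃ a₀, ∀ a ≠ a₀, (if g a = b then f a else 0) = 0 := by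
  by_cases h : ∃ a₀, g a₀ = b ∧ f a₀ ≠ 0
  · obtain ⟨a₀, hga₀, hfa₀⟩ := h
    refine ⟨a₀, fun a ha => ite_eq_right_iff.mpr fun hga => ?_⟩
    by_contra hfa
    exact ha (hinj hfa hfa₀ (hga.trans hga₀.symm))
  · push Not at h
    exact ⟨Classical.arbitrary α, fun a _ => ite_eq_right_iff.mpr (h a)⟩

section Fiber

variable {α β : Type*} [Fintype α] [DecidableEq β] (g : α → β) (f : α → ℝ)

lemma sum_sum_fiber [Fintype β] {φ : ℝ → ℝ} (hφ : φ 0 = 0) :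
    ∑ b, ∑ a, φ (if g a = b then f a else 0) = ∑ a, φ (f a) := by
  rw [sum_comm]
  refine sum_congr rfl fun a _ => ?_
  simp [apply_ite φ, hφ]

lemma fiber_eq_zero_of_notMem_image {b : β} (hb : b ∉ univ.image g) (a : α) :
    (if g a = b then f a else 0) = 0 :=
  if_neg fun h => hb (mem_image.mpr ⟨a, mem_univ a, h⟩)

lemma sum_negMulLog_fiberSum_sub_le [Fintype β] (hf : ∀ a, 0 ≤ f a) :
    ∑ b, negMulLog (∑ a, if g a = b then f a else 0) - negMulLog (∑ a, f a) ≤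
      (∑ a, f a) * log #(univ.image g) := by
  set F : β → ℝ := fun b => ∑ a, if g a = b then f a else 0
  have hF : ∀ b ∉ univ.image g, F b = 0 := fun b hb =>
    sum_eq_zero fun a _ => fiber_eq_zero_of_notMem_image g f hb a
  have hsumF : ∑ b ∈ univ.image g, F b = ∑ a, f a := by
    rw [sum_subset (subset_univ _) fun b _ hb => hF b hb]
    simpa using sum_sum_fiber g f (φ := id) rfl
  have hnml : ∑ b, negMulLog (F b) = ∑ b ∈ univ.image g, negMulLog (F b) :=
    (sum_subset (subset_univ _) fun b _ hb => by rw [hF b hb, negMulLog_zero]).symm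
  rw [hnml, ← hsumF]
  exact sum_negMulLog_sub_negMulLog_sum_le fun b _ =>
    sum_nonneg fun a _ => by split_ifs <;> simp [hf a]

variable [Nonempty α]

lemma sup'_le_sum_fiberSup [Fintype β] (hf : ∀ a, 0 ≤ f a) :
    univ.sup' univ_nonempty f ≤
      ∑ b, univ.sup' univ_nonempty (fun a => if g a = b then f a else 0) := by
  obtain ⟨a₀, -, ha₀⟩ := exists_mem_eq_sup' univ_nonempty f
  have hfiber : ∀ b, 0 ≤ univ.sup' univ_nonempty (fun a => if g a = b then f a else 0) :=
    fun b => le_sup'_of_le _ (mem_univ a₀) (by split_ifs <;> simp [hf a₀])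
  rw [ha₀]
  calc f a₀ ≤ univ.sup' univ_nonempty (fun a => if g a = g a₀ then f a else 0) :=
        le_sup'_of_le _ (mem_univ a₀) (by simp)
    _ ≤ _ := single_le_sum (fun b _ => hfiber b) (mem_univ _)

lemma sum_fiberSup_le_card_image_mul [Fintype β] (hf : ∀ a, 0 ≤ f a) :
    ∑ b, univ.sup' univ_nonempty (fun a => if g a = b then f a else 0) ≤
      #(univ.image g) * univ.sup' univ_nonempty f := by
  rw [← sum_subset (subset_univ (univ.image g)) fun b _ hb => by
    simp [fiber_eq_zero_of_notMem_image g f hb]]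
  calc _ ≤ ∑ _b ∈ univ.image g, univ.sup' univ_nonempty f :=
        sum_le_sum fun b _ => sup'_le _ _ fun a _ => by
          split_ifs
          · exact le_sup' f (mem_univ a)
          · exact (hf a).trans (le_sup' f (mem_univ a))
    _ = _ := by rw [sum_const, nsmul_eq_mul]

lemma sum_negMulLog_fiberSum_of_injOn [Fintype β] (hinj : Set.InjOn g (Function.support f)) :
    ∑ b, negMulLog (∑ a, if g a = b then f a else 0) = ∑ a, negMulLog (f a) := by
  rw [← sum_sum_fiber g f negMulLog_zero]
  refine sum_congr rfl fun b _ => ?_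
  obtain ⟨a₀, h⟩ := exists_fiber_eq_zero_of_ne g f hinj b
  rw [sum_eq_single a₀ (fun a _ ha => h a ha) (by simp),
    sum_eq_single a₀ (fun a _ ha => by rw [h a ha, negMulLog_zero]) (by simp)]

lemma sum_le_sum_fiberSup_of_injOn [Fintype β] (hinj : Set.InjOn g (Function.support f)) :
    ∑ a, f a ≤ ∑ b, univ.sup' univ_nonempty (fun a => if g a = b then f a else 0) := by
  have hsum := sum_sum_fiber g f (φ := id) rfl
  simp only [id] at hsum
  rw [← hsum]
  refine sum_le_sum fun b _ => ?_
  obtain ⟨a₀, h⟩ := exists_fiber_eq_zero_of_ne g f hinj b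
  rw [sum_eq_single a₀ (fun a _ ha => h a ha) (by simp)]
  exact le_sup' (fun a => if g a = b then f a else 0) (mem_univ a₀)

end Fiber

section Program

variable [Fintype Hi] [DecidableEq Oi] (M : Hi × Li → Oi)

def numOutputs (ℓ : Li) : ℕ := #(univ.image fun h => M (h, ℓ))

def maxNumOutputs [Fintype Li] : ℕ := univ.sup (numOutputs M)

lemma numOutputs_le_maxNumOutputs [Fintype Li] (ℓ : Li) : numOutputs M ℓ ≤ maxNumOutputs M :=
  le_sup (mem_univ ℓ)

lemma numOutputs_pos [Nonempty Hi] (ℓ : Li) : 0 < numOutputs M ℓ :=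
  card_pos.mpr (univ_nonempty.image _)

lemma maxNumOutputs_pos [Fintype Li] [Nonempty Hi] [Nonempty Li] : 0 < maxNumOutputs M :=
  (numOutputs_pos M (Classical.arbitrary Li)).trans_le (numOutputs_le_maxNumOutputs M _)

lemma exists_numOutputs_eq_maxNumOutputs [Fintype Li] [Nonempty Li] :
    ∃ ℓ, numOutputs M ℓ = maxNumOutputs M := by
  obtain ⟨ℓ, -, h⟩ := exists_mem_eq_sup univ univ_nonempty (numOutputs M)
  exact ⟨ℓ, h.symm⟩

lemma exists_injOn_card_eq_numOutputs (ℓ : Li) :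
    ∃ T : Finset Hi, Set.InjOn (fun h => M (h, ℓ)) T ∧ #T = numOutputs M ℓ := by
  obtain ⟨T, -, hinj, himg⟩ := exists_subset_injOn_image_eq_of_surjOn Set.univ
    (univ.image fun h => M (h, ℓ)) fun o ho => by simpa using ho
  exact ⟨T, hinj, by rw [numOutputs, ← himg, card_image_of_injOn hinj]⟩

lemma exists_injOn_card_eq_maxNumOutputs [Fintype Li] [Nonempty Hi] [Nonempty Li] :
    ∃ (T : Finset Hi) (ℓ₀ : Li), T.Nonempty ∧ Set.InjOn (fun h => M (h, ℓ₀)) T ∧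
      #T = maxNumOutputs M := by
  obtain ⟨ℓ₀, hℓ₀⟩ := exists_numOutputs_eq_maxNumOutputs M
  obtain ⟨T, hinj, hcard⟩ := exists_injOn_card_eq_numOutputs M ℓ₀
  refine ⟨T, ℓ₀, card_pos.mp ?_, hinj, hcard.trans hℓ₀⟩
  rw [hcard]
  exact numOutputs_pos M ℓ₀

variable [Fintype Li] [Fintype Oi] {μ : Hi × Li → ℝ}

lemma sum_pL (μ : Hi × Li → ℝ) : ∑ ℓ, pL μ ℓ = ∑ a, μ a :=
  (Fintype.sum_prod_type_right μ).symm

lemma condEntHL_eq (hμ : ∀ a, 0 ≤ μ a) :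
    condEntHL μ = ∑ ℓ, (∑ h, negMulLog (μ (h, ℓ)) - negMulLog (pL μ ℓ)) / log 2 :=
  sum_congr rfl fun ℓ _ => sum_mul_sum_entTerm_div fun h _ => hμ (h, ℓ)

lemma condEntHOL_eq (hμ : ∀ a, 0 ≤ μ a) :
    condEntHOL M μ =
      ∑ ℓ, (∑ h, negMulLog (μ (h, ℓ)) - ∑ o, negMulLog (pOL M μ o ℓ)) / log 2 := by
  refine sum_congr rfl fun ℓ _ => ?_
  have hrow : ∀ o, pOL M μ o ℓ *
      ∑ h, entTerm ((if M (h, ℓ) = o then μ (h, ℓ) else 0) / pOL M μ o ℓ) =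
      (∑ h, negMulLog (if M (h, ℓ) = o then μ (h, ℓ) else 0) - negMulLog (pOL M μ o ℓ)) /
        log 2 :=
    fun o => sum_mul_sum_entTerm_div fun h _ => by split_ifs <;> simp [hμ]
  rw [sum_congr rfl fun o _ => hrow o, ← sum_div, sum_sub_distrib,
    sum_sum_fiber (fun h => M (h, ℓ)) (fun h => μ (h, ℓ)) negMulLog_zero]

lemma SE_eq (hμ : ∀ a, 0 ≤ μ a) :
    SE M μ = ∑ ℓ, (∑ o, negMulLog (pOL M μ o ℓ) - negMulLog (pL μ ℓ)) / log 2 := by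
  rw [SE, condEntHL_eq hμ, condEntHOL_eq M hμ, ← sum_sub_distrib]
  refine sum_congr rfl fun ℓ _ => ?_
  ring

lemma SE_le_logb_maxNumOutputs [Nonempty Hi] (hμ : ∀ a, 0 ≤ μ a) (h1 : ∑ a, μ a = 1) :
    SE M μ ≤ logb 2 (maxNumOutputs M) := by
  have hrow : ∀ ℓ, ∑ o, negMulLog (pOL M μ o ℓ) - negMulLog (pL μ ℓ) ≤
      pL μ ℓ * log (maxNumOutputs M) := fun ℓ =>
    calc _ ≤ pL μ ℓ * log (numOutputs M ℓ) :=
          sum_negMulLog_fiberSum_sub_le (fun h => M (h, ℓ)) (fun h => μ (h, ℓ)) fun h => hμ _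
      _ ≤ _ := by
          refine mul_le_mul_of_nonneg_left (log_le_log ?_ ?_) (sum_nonneg fun h _ => hμ _)
          · exact_mod_cast numOutputs_pos M ℓ
          · exact_mod_cast numOutputs_le_maxNumOutputs M ℓ
  rw [SE_eq M hμ, logb, ← sum_div]
  gcongr
  calc _ ≤ ∑ ℓ, pL μ ℓ * log (maxNumOutputs M) := sum_le_sum fun ℓ _ => hrow ℓ
    _ = _ := by rw [← sum_mul, sum_pL, h1, one_mul]

lemma condEntHOL_eq_zero_of_injOn [Nonempty Hi] (hμ : ∀ a, 0 ≤ μ a)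
    (hinj : ∀ ℓ, Set.InjOn (fun h => M (h, ℓ)) (Function.support fun h => μ (h, ℓ))) :
    condEntHOL M μ = 0 := by
  rw [condEntHOL_eq M hμ]
  refine sum_eq_zero fun ℓ _ => ?_
  rw [show ∑ o, negMulLog (pOL M μ o ℓ) = ∑ h, negMulLog (μ (h, ℓ)) from
    sum_negMulLog_fiberSum_of_injOn _ _ (hinj ℓ), sub_self, zero_div]

end Program

section Vulnerability

variable [Fintype Hi] [Fintype Li] [Nonempty Hi] {μ : Hi × Li → ℝ}

lemma VHL_eq_sum_sup' (hμ : ∀ a, 0 ≤ μ a) :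
    VHL μ = ∑ ℓ, univ.sup' univ_nonempty fun h => μ (h, ℓ) :=
  sum_congr rfl fun ℓ _ => sum_mul_sup'_div_sum fun h => hμ (h, ℓ)

lemma VHL_pos (hμ : ∀ a, 0 ≤ μ a) (h1 : ∑ a, μ a = 1) : 0 < VHL μ := by
  obtain ⟨⟨h, ℓ⟩, -, hpos⟩ := exists_lt_of_sum_lt (f := 0) (g := μ) (s := univ) (by simp [h1])
  have hsup : ∀ ℓ', μ (h, ℓ') ≤ univ.sup' univ_nonempty fun h' => μ (h', ℓ') :=
    fun ℓ' => le_sup' (fun h' => μ (h', ℓ')) (mem_univ h)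
  rw [VHL_eq_sum_sup' hμ]
  calc 0 < μ (h, ℓ) := hpos
    _ ≤ _ := hsup ℓ
    _ ≤ _ := single_le_sum (fun ℓ' _ => (hμ (h, ℓ')).trans (hsup ℓ')) (mem_univ ℓ)

variable [Fintype Oi] [DecidableEq Oi] (M : Hi × Li → Oi)

lemma VHOL_eq_sum_sum_sup' (hμ : ∀ a, 0 ≤ μ a) :
    VHOL M μ = ∑ ℓ, ∑ o, univ.sup' univ_nonempty
      fun h => if M (h, ℓ) = o then μ (h, ℓ) else 0 :=
  sum_congr rfl fun ℓ _ => sum_congr rfl fun o _ =>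
    sum_mul_sup'_div_sum fun h => by split_ifs <;> simp [hμ]

lemma VHL_le_VHOL (hμ : ∀ a, 0 ≤ μ a) : VHL μ ≤ VHOL M μ := by
  rw [VHL_eq_sum_sup' hμ, VHOL_eq_sum_sum_sup' M hμ]
  exact sum_le_sum fun ℓ _ => sup'_le_sum_fiberSup _ _ fun h => hμ (h, ℓ)

lemma VHOL_le_maxNumOutputs_mul_VHL (hμ : ∀ a, 0 ≤ μ a) :
    VHOL M μ ≤ maxNumOutputs M * VHL μ := by
  rw [VHL_eq_sum_sup' hμ, VHOL_eq_sum_sum_sup' M hμ, mul_sum]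
  refine sum_le_sum fun ℓ _ => (sum_fiberSup_le_card_image_mul _ _ fun h => hμ (h, ℓ)).trans ?_
  refine mul_le_mul_of_nonneg_right (Nat.cast_le.mpr (numOutputs_le_maxNumOutputs M ℓ)) ?_
  exact (hμ (Classical.arbitrary Hi, ℓ)).trans (le_sup' (fun h => μ (h, ℓ)) (mem_univ _))

lemma sum_le_VHOL_of_injOn (hμ : ∀ a, 0 ≤ μ a)
    (hinj : ∀ ℓ, Set.InjOn (fun h => M (h, ℓ)) (Function.support fun h => μ (h, ℓ))) :
    ∑ a, μ a ≤ VHOL M μ := by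
  rw [VHOL_eq_sum_sum_sup' M hμ, Fintype.sum_prod_type_right]
  exact sum_le_sum fun ℓ _ => sum_le_sum_fiberSup_of_injOn _ _ (hinj ℓ)

lemma ME_eq : ME M μ = logb 2 (VHOL M μ) - logb 2 (VHL μ) := by
  rw [ME, one_div, one_div, logb_inv, logb_inv]
  ring

lemma ME_le_logb_maxNumOutputs [Nonempty Li] (hμ : ∀ a, 0 ≤ μ a) (h1 : ∑ a, μ a = 1) :
    ME M μ ≤ logb 2 (maxNumOutputs M) := by
  have hVHL := VHL_pos hμ h1
  have hK : (0 : ℝ) < maxNumOutputs M := by exact_mod_cast maxNumOutputs_pos M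
  have hmono : logb 2 (VHOL M μ) ≤ logb 2 (maxNumOutputs M * VHL μ) :=
    logb_le_logb_of_le one_lt_two (hVHL.trans_le (VHL_le_VHOL M hμ))
      (VHOL_le_maxNumOutputs_mul_VHL M hμ)
  rw [logb_mul hK.ne' hVHL.ne'] at hmono
  rw [ME_eq]
  linarith

end Vulnerability

section Witness

variable {T : Finset Hi} {ℓ₀ : Li}

open Classical in
noncomputable def uniformOnRow (T : Finset Hi) (ℓ₀ : Li) (a : Hi × Li) : ℝ :=
  if a.1 ∈ T ∧ a.2 = ℓ₀ then (#T : ℝ)⁻¹ else 0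

lemma uniformOnRow_nonneg (a : Hi × Li) : 0 ≤ uniformOnRow T ℓ₀ a := by
  unfold uniformOnRow
  split_ifs <;> positivity

lemma uniformOnRow_of_mem {h : Hi} (hh : h ∈ T) : uniformOnRow T ℓ₀ (h, ℓ₀) = (#T : ℝ)⁻¹ :=
  if_pos ⟨hh, rfl⟩

lemma uniformOnRow_of_notMem {h : Hi} (hh : h ∉ T) (ℓ : Li) : uniformOnRow T ℓ₀ (h, ℓ) = 0 :=
  if_neg fun h' => hh h'.1

lemma uniformOnRow_of_ne {ℓ : Li} (hℓ : ℓ ≠ ℓ₀) (h : Hi) : uniformOnRow T ℓ₀ (h, ℓ) = 0 :=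
  if_neg fun h' => hℓ h'.2

lemma injOn_support_uniformOnRow (M : Hi × Li → Oi) (hinj : Set.InjOn (fun h => M (h, ℓ₀)) T)
    (ℓ : Li) :
    Set.InjOn (fun h => M (h, ℓ)) (Function.support fun h => uniformOnRow T ℓ₀ (h, ℓ)) := by
  rcases eq_or_ne ℓ ℓ₀ with rfl | hℓ
  · refine hinj.mono fun h hh => ?_
    by_contra hhT
    exact hh (uniformOnRow_of_notMem hhT ℓ)
  · exact fun h hh => (hh (uniformOnRow_of_ne hℓ h)).elim

variable [Fintype Hi]

lemma sum_comp_uniformOnRow {φ : ℝ → ℝ} (hφ : φ 0 = 0) :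
    ∑ h, φ (uniformOnRow T ℓ₀ (h, ℓ₀)) = #T * φ (#T : ℝ)⁻¹ := by
  rw [← sum_subset (subset_univ T) fun h _ hh => by rw [uniformOnRow_of_notMem hh, hφ],
    sum_congr rfl fun h hh => by rw [uniformOnRow_of_mem hh], sum_const, nsmul_eq_mul]

lemma pL_uniformOnRow_self (hT : T.Nonempty) : pL (uniformOnRow T ℓ₀) ℓ₀ = 1 := by
  have hrow := sum_comp_uniformOnRow (T := T) (ℓ₀ := ℓ₀) (φ := id) rfl
  simp only [id] at hrow
  rw [pL, hrow, mul_inv_cancel₀ (Nat.cast_ne_zero.mpr hT.card_pos.ne')]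

lemma pL_uniformOnRow_of_ne {ℓ : Li} (hℓ : ℓ ≠ ℓ₀) : pL (uniformOnRow T ℓ₀) ℓ = 0 :=
  sum_eq_zero fun h _ => uniformOnRow_of_ne hℓ h

variable [Fintype Li]

lemma sum_uniformOnRow (hT : T.Nonempty) : ∑ a, uniformOnRow T ℓ₀ a = 1 := by
  rw [← sum_pL, sum_eq_single ℓ₀ (fun ℓ _ hℓ => pL_uniformOnRow_of_ne hℓ) (by simp),
    pL_uniformOnRow_self hT]

lemma condEntHL_uniformOnRow (hT : T.Nonempty) :
    condEntHL (uniformOnRow T ℓ₀) = logb 2 #T := by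
  rw [condEntHL, sum_eq_single ℓ₀
      (fun ℓ _ hℓ => by rw [pL_uniformOnRow_of_ne hℓ, zero_mul]) (by simp),
    pL_uniformOnRow_self hT, one_mul]
  simp only [div_one]
  rw [sum_comp_uniformOnRow entTerm_zero, entTerm, one_div, inv_inv, ← mul_assoc,
    mul_inv_cancel₀ (Nat.cast_ne_zero.mpr hT.card_pos.ne'), one_mul]

lemma VHL_uniformOnRow [Nonempty Hi] (hT : T.Nonempty) :
    VHL (uniformOnRow T ℓ₀) = (#T : ℝ)⁻¹ := by
  rw [VHL_eq_sum_sup' uniformOnRow_nonneg,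
    sum_eq_single ℓ₀ (fun ℓ _ hℓ => by simp [uniformOnRow_of_ne hℓ]) (by simp)]
  obtain ⟨t, ht⟩ := hT
  refine le_antisymm (sup'_le _ _ fun h _ => ?_) (le_sup'_of_le _ (mem_univ t) ?_)
  · unfold uniformOnRow
    split_ifs
    · exact le_rfl
    · positivity
  · exact (uniformOnRow_of_mem ht).ge

variable [Fintype Oi] [DecidableEq Oi] [Nonempty Hi] (M : Hi × Li → Oi)

lemma SE_uniformOnRow (hT : T.Nonempty) (hinj : Set.InjOn (fun h => M (h, ℓ₀)) T) :
    SE M (uniformOnRow T ℓ₀) = logb 2 #T := by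
  rw [SE, condEntHOL_eq_zero_of_injOn M (μ := uniformOnRow T ℓ₀) uniformOnRow_nonneg
      (injOn_support_uniformOnRow M hinj),
    sub_zero, condEntHL_uniformOnRow hT]

lemma logb_card_le_ME_uniformOnRow (hT : T.Nonempty)
    (hinj : Set.InjOn (fun h => M (h, ℓ₀)) T) :
    logb 2 #T ≤ ME M (uniformOnRow T ℓ₀) := by
  have hVHOL : 1 ≤ VHOL M (uniformOnRow T ℓ₀) := (sum_uniformOnRow hT).ge.trans
    (sum_le_VHOL_of_injOn M uniformOnRow_nonneg (injOn_support_uniformOnRow M hinj))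
  rw [ME_eq, VHL_uniformOnRow hT, logb_inv, sub_neg_eq_add]
  linarith [logb_nonneg one_lt_two hVHOL]

end Witness

section Capacity

variable [Fintype Hi] [Fintype Li] [Fintype Oi] [DecidableEq Oi] [Nonempty Hi] [Nonempty Li]
  (M : Hi × Li → Oi)

lemma isGreatest_SE : IsGreatest
    {x : ℝ | ∃ μ : Hi × Li → ℝ, (∀ a, 0 ≤ μ a) ∧ (∑ a, μ a = 1) ∧ x = SE M μ}
    (logb 2 (maxNumOutputs M)) := by
  obtain ⟨T, ℓ₀, hT, hinj, hcard⟩ := exists_injOn_card_eq_maxNumOutputs M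
  refine ⟨⟨uniformOnRow T ℓ₀, uniformOnRow_nonneg, sum_uniformOnRow hT, ?_⟩, ?_⟩
  · rw [SE_uniformOnRow M hT hinj, hcard]
  · rintro x ⟨μ, hμ, h1, rfl⟩
    exact SE_le_logb_maxNumOutputs M hμ h1

lemma isGreatest_ME : IsGreatest
    {x : ℝ | ∃ μ : Hi × Li → ℝ, (∀ a, 0 ≤ μ a) ∧ (∑ a, μ a = 1) ∧ x = ME M μ}
    (logb 2 (maxNumOutputs M)) := by
  obtain ⟨T, ℓ₀, hT, hinj, hcard⟩ := exists_injOn_card_eq_maxNumOutputs M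
  refine ⟨⟨uniformOnRow T ℓ₀, uniformOnRow_nonneg, sum_uniformOnRow hT, ?_⟩, ?_⟩
  · refine le_antisymm ?_ (ME_le_logb_maxNumOutputs M uniformOnRow_nonneg (sum_uniformOnRow hT))
    exact hcard ▸ logb_card_le_ME_uniformOnRow M hT hinj
  · rintro x ⟨μ, hμ, h1, rfl⟩
    exact ME_le_logb_maxNumOutputs M hμ h1

end Capacity

/-- The maximum of `ME[μ](M)` over all distributions equals the channel
capacity `CC(M)`. -/
theorem maxME_eq_CC
    [Fintype Hi] [Fintype Li] [Fintype Oi] [DecidableEq Oi] [Nonempty Hi] [Nonempty Li]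
    (M : Hi × Li → Oi) :
    sSup {x : ℝ | ∃ μ : Hi × Li → ℝ, (∀ a, 0 ≤ μ a) ∧ (∑ a, μ a = 1) ∧ x = ME M μ} =
      CC M := by
  rw [(isGreatest_ME M).csSup_eq, CC, (isGreatest_SE M).csSup_eq]
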